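/- arXiv:1708.09145 — 4 statements merged into one kernel-verified Lean document; each statement's English description precedes it below -/
import Mathlib

section
/- Let (V, g₀, I₀) be a finite-dimensional real vector space with a linear Hermitian structure (g₀ a positive definite inner product, I₀² = −id, I₀ orthogonal for g₀). On V^c = V × V with the complex structure J = (I₀, −I₀), there exists a unique linear hyper-Hermitian structure (g, I, J, K) such that: I, J, K are g-orthogonal, satisfy I² = J² = K² = −id and IJ = −JI = K; the restriction of g and I to the diagonal copy of V agrees with g₀ and I₀; and ω_I − i ω_K restricted appropriately gives the complexification of ω₀(u,v) = g₀(I₀u, v). -/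
/-- Uniqueness of the admissible linear hyper-Hermitian extension of a linear
Hermitian structure `(g₀, I₀)` on `V` to the complexification `V^c = V × V`
with complex structure `J = (I₀, −I₀)`. -/
theorem unique_linear_hyperHermitian_extension
    (V : Type*) [AddCommGroup V] [Module ℝ V] [FiniteDimensional ℝ V]
    (g₀ : V →ₗ[ℝ] V →ₗ[ℝ] ℝ)
    (hg₀symm : ∀ u v, g₀ u v = g₀ v u)
    (hg₀pos : ∀ u, u ≠ 0 → 0 < g₀ u u)
    (I₀ : V →ₗ[ℝ] V) (hI₀ : I₀ ∘ₗ I₀ = -LinearMap.id)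
    (hI₀orth : ∀ u v, g₀ (I₀ u) (I₀ v) = g₀ u v) :
    ∃! gIK : ((V × V) →ₗ[ℝ] (V × V) →ₗ[ℝ] ℝ) ×
              ((V × V) →ₗ[ℝ] (V × V)) × ((V × V) →ₗ[ℝ] (V × V)),
      (fun (g : (V × V) →ₗ[ℝ] (V × V) →ₗ[ℝ] ℝ)
           (I : (V × V) →ₗ[ℝ] (V × V)) (K : (V × V) →ₗ[ℝ] (V × V)) =>
        let J : (V × V) →ₗ[ℝ] (V × V) := LinearMap.prodMap I₀ (-I₀)
        -- g is a positive definite inner product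
        (∀ u v, g u v = g v u) ∧ (∀ u, u ≠ 0 → 0 < g u u) ∧
        -- quaternionic relations
        I ∘ₗ I = -LinearMap.id ∧ J ∘ₗ J = -LinearMap.id ∧ K ∘ₗ K = -LinearMap.id ∧
        I ∘ₗ J = K ∧ J ∘ₗ I = -K ∧
        -- I, J, K are g-orthogonal
        (∀ u v, g (I u) (I v) = g u v) ∧
        (∀ u v, g (J u) (J v) = g u v) ∧
        (∀ u v, g (K u) (K v) = g u v) ∧
        -- g and I restrict to g₀ and I₀ on the diagonal copy of V
        (∀ u v : V, g (u, u) (v, v) = g₀ u v) ∧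
        (∀ u : V, I (u, u) = (I₀ u, I₀ u)) ∧
        -- ω_I − i ω_K is J-complex bilinear and restricts to the
        -- complexification of ω₀(u,v) = g₀(I₀ u, v) on the diagonal
        (∀ u v : V × V,
          ((g (I (J u)) v : ℂ) - Complex.I * (g (K (J u)) v : ℂ))
            = Complex.I * ((g (I u) v : ℂ) - Complex.I * (g (K u) v : ℂ))) ∧
        (∀ u v : V,
          ((g (I (u, u)) (v, v) : ℂ) - Complex.I * (g (K (u, u)) (v, v) : ℂ))
            = (g₀ (I₀ u) v : ℂ))) gIK.1 gIK.2.1 gIK.2.2 := by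
  have hI₀' : ∀ x, I₀ (I₀ x) = -x := fun x => by
    have := LinearMap.congr_fun hI₀ x; simpa using this
  have hnn : ∀ u, 0 ≤ g₀ u u := by
    intro u
    by_cases h : u = 0
    · simp [h]
    · exact (hg₀pos u h).le
  -- candidate structure
  set G : (V × V) →ₗ[ℝ] (V × V) →ₗ[ℝ] ℝ :=
    LinearMap.mk₂ ℝ (fun p q => (g₀ p.1 q.1 + g₀ p.2 q.2) / 2)
      (fun p p' q => by simp; ring)
      (fun c p q => by simp; ring)
      (fun p q q' => by simp; ring)
      (fun c p q => by simp; ring) with hG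
  set Iop : (V × V) →ₗ[ℝ] (V × V) :=
    LinearMap.prod (I₀ ∘ₗ LinearMap.snd ℝ V V) (I₀ ∘ₗ LinearMap.fst ℝ V V) with hIop
  set Kop : (V × V) →ₗ[ℝ] (V × V) :=
    LinearMap.prod (LinearMap.snd ℝ V V) (-(LinearMap.fst ℝ V V)) with hKop
  set Jm : (V × V) →ₗ[ℝ] (V × V) := LinearMap.prodMap I₀ (-I₀) with hJm
  have hGval : ∀ p q : V × V, G p q = (g₀ p.1 q.1 + g₀ p.2 q.2) / 2 := fun p q => rfl
  have hIval : ∀ p : V × V, Iop p = (I₀ p.2, I₀ p.1) := fun p => rfl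
  have hKval : ∀ p : V × V, Kop p = (p.2, -p.1) := fun p => rfl
  have hJval : ∀ p : V × V, Jm p = (I₀ p.1, -I₀ p.2) := fun p => rfl
  refine ⟨(G, Iop, Kop), ?_, ?_⟩
  · refine ⟨?_, ?_, ?_, ?_, ?_, ?_, ?_, ?_, ?_, ?_, ?_, ?_, ?_, ?_⟩
    · intro u v
      rw [hGval, hGval, hg₀symm u.1, hg₀symm u.2]
    · intro u hu
      rw [hGval]
      have h1 : u.1 ≠ 0 ∨ u.2 ≠ 0 := by
        by_contra h
        push_neg at h
        exact hu (Prod.ext h.1 h.2)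
      rcases h1 with h | h
      · have := hg₀pos u.1 h
        have := hnn u.2
        linarith
      · have := hg₀pos u.2 h
        have := hnn u.1
        linarith
    · ext p <;> simp [hIval, hI₀']
    · ext p <;> simp [hJval, hI₀']
    · ext p <;> simp [hKval]
    · ext p <;> simp [hIval, hJval, hKval, hI₀']
    · ext p <;> simp [hIval, hJval, hKval, hI₀']
    · intro u v
      rw [hGval, hGval, hIval, hIval]
      simp [hI₀orth]
      ring
    · intro u v
      rw [hGval, hGval, hJval, hJval]
      simp [hI₀orth]
    · intro u v
      rw [hGval, hGval, hKval, hKval]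
      simp
      ring
    · intro u v
      rw [hGval]
      ring
    · intro u
      rw [hIval]
    · intro u v
      rw [hJval, hIval, hKval, hKval, hIval]
      simp only [hGval]
      simp only [map_neg, LinearMap.neg_apply, LinearMap.map_neg, hI₀']
      apply Complex.ext <;> simp <;> ring
    · intro u v
      rw [hIval, hKval]
      simp only [hGval]
      apply Complex.ext <;> simp [hg₀symm u v] <;> ring
  · rintro ⟨g, I, K⟩ hy
    obtain ⟨hsymm, hpos, hII, hJJ, hKK, hIJ, hJI, hIo, hJo, hKo, hgd, hId, hcx, hdiag⟩ := hy
    dsimp only at hsymm hpos hII hJJ hKK hIJ hJI hIo hJo hKo hgd hId hcx hdiag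
    -- I anticommutes with J
    have hIanti : ∀ p, I (Jm p) = - Jm (I p) := by
      intro p
      have h1 := LinearMap.congr_fun hIJ p
      have h2 := LinearMap.congr_fun hJI p
      simp only [LinearMap.comp_apply, LinearMap.neg_apply] at h1 h2
      rw [h1, h2, neg_neg]
    -- value of I everywhere
    have hIv : ∀ p : V × V, I p = (I₀ p.2, I₀ p.1) := by
      rintro ⟨u₁, u₂⟩
      show I ((u₁, u₂) : V × V) = (I₀ u₂, I₀ u₁)
      set a := (1/2 : ℝ) • (u₁ + u₂) with ha
      set b := (1/2 : ℝ) • (u₁ - u₂) with hb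
      set c := -I₀ b with hc
      have hu1 : u₁ = a + b := by rw [ha, hb]; module
      have hu2 : u₂ = a - b := by rw [ha, hb]; module
      have hJc : Jm (c, c) = (b, -b) := by
        rw [hJval]
        simp [hc, hI₀']
      have hJIc : Jm ((I₀ c, I₀ c) : V × V) = ((-c, c) : V × V) := by
        rw [hJval]
        simp [hI₀']
      have hp : ((u₁, u₂) : V × V) = ((a, a) : V × V) + Jm (c, c) := by
        rw [hJc, Prod.ext_iff]
        constructor
        · simpa using hu1
        · simp
          rw [hu2]
          abel
      calc I ((u₁, u₂) : V × V)
          = I ((a, a) : V × V) + I (Jm ((c, c) : V × V)) := by rw [← map_add, ← hp]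
        _ = ((I₀ a, I₀ a) : V × V) + -(Jm (I ((c, c) : V × V))) := by rw [hId, hIanti]
        _ = ((I₀ a, I₀ a) : V × V) + -(Jm ((I₀ c, I₀ c) : V × V)) := by rw [hId]
        _ = ((I₀ a, I₀ a) : V × V) + -((-c, c) : V × V) := by rw [hJIc]
        _ = (I₀ u₂, I₀ u₁) := by
            rw [Prod.ext_iff]
            constructor
            · show I₀ a + -(-c) = I₀ u₂
              rw [hu2, hc, map_sub]
              abel
            · show I₀ a + -c = I₀ u₁
              rw [hu1, hc, map_add]
              abel
    have hIeq : I = Iop := by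
      apply LinearMap.ext
      intro p
      rw [hIv, hIval]
    have hKeq : K = Kop := by
      rw [← hIJ, hIeq]
      apply LinearMap.ext
      intro p
      rw [LinearMap.comp_apply, hJval, hIval, hKval]
      simp [hI₀']
    -- g on the anti-diagonal against the diagonal vanishes
    have h0 : ∀ u v : V, g ((u, -u) : V × V) ((v, v) : V × V) = 0 := by
      intro u v
      have him := congrArg Complex.im (hdiag u v)
      have hKuu : K ((u, u) : V × V) = ((u, -u) : V × V) := by
        rw [hKeq, hKval]
      rw [hKuu] at him
      simpa using him
    have h0' : ∀ u v : V, g ((u, u) : V × V) ((v, -v) : V × V) = 0 := by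
      intro u v
      rw [hsymm]
      exact h0 v u
    -- g on the anti-diagonal
    have h2 : ∀ u v : V, g ((u, -u) : V × V) ((v, -v) : V × V) = g₀ u v := by
      intro u v
      have hu : ((u, -u) : V × V) = Jm ((-I₀ u, -I₀ u) : V × V) := by
        rw [hJval]; simp [hI₀']
      have hv : ((v, -v) : V × V) = Jm ((-I₀ v, -I₀ v) : V × V) := by
        rw [hJval]; simp [hI₀']
      rw [hu, hv, hJo, hgd]
      simp [hI₀orth]
    have hgeq : g = G := by
      apply LinearMap.ext
      intro p
      apply LinearMap.ext
      intro q
      obtain ⟨u₁, u₂⟩ := p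
      obtain ⟨v₁, v₂⟩ := q
      have hp : ((u₁, u₂) : V × V)
          = (((1/2 : ℝ) • (u₁ + u₂), (1/2 : ℝ) • (u₁ + u₂)) : V × V)
            + (((1/2 : ℝ) • (u₁ - u₂), -((1/2 : ℝ) • (u₁ - u₂))) : V × V) := by
        rw [Prod.ext_iff]; constructor <;> · simp; module
      have hq : ((v₁, v₂) : V × V)
          = (((1/2 : ℝ) • (v₁ + v₂), (1/2 : ℝ) • (v₁ + v₂)) : V × V)
            + (((1/2 : ℝ) • (v₁ - v₂), -((1/2 : ℝ) • (v₁ - v₂))) : V × V) := by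
        rw [Prod.ext_iff]; constructor <;> · simp; module
      rw [hp, hq]
      simp only [map_add, LinearMap.add_apply]
      rw [hgd, h0', h0, h2]
      simp only [hGval]
      simp only [map_add, map_sub, map_smul, map_neg, smul_eq_mul, LinearMap.add_apply,
        LinearMap.sub_apply, LinearMap.smul_apply, LinearMap.neg_apply]
      ring
    rw [Prod.ext_iff, Prod.ext_iff]
    exact ⟨hgeq, hIeq, hKeq⟩
end

section
/- For a locally injective holomorphic function f on an open subset of ℂ with f' nonvanishing, the Schwarzian derivative S f = f'''/f' − (3/2)(f''/f')² vanishes identically if and only if f is (the restriction of) a Möbius transformation z ↦ (az+b)/(cz+d) with ad − bc ≠ 0. -/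
open Set Filter Topology Metric

/-- The Schwarzian derivative `Sf = f'''/f' − (3/2)(f''/f')²`. -/
noncomputable def schwarzian (f : ℂ → ℂ) (z : ℂ) : ℂ :=
  deriv (deriv (deriv f)) z / deriv f z
    - (3 / 2) * (deriv (deriv f) z / deriv f z) ^ 2

private lemma const_on_convex {s : Set ℂ} (hconv : Convex ℝ s) (hopen : IsOpen s)
    {H : ℂ → ℂ} (hdiff : ∀ z ∈ s, DifferentiableAt ℂ H z)
    (hd : ∀ z ∈ s, deriv H z = 0) {x y : ℂ} (hx : x ∈ s) (hy : y ∈ s) : H x = H y := by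
  refine hconv.is_const_of_fderivWithin_eq_zero
    (fun z hz => (hdiff z hz).differentiableWithinAt) (fun w hw => ?_) hx hy
  rw [fderivWithin_of_isOpen hopen hw]
  have h1 : fderiv ℂ H w = ContinuousLinearMap.smulRight (1 : ℂ →L[ℂ] ℂ) (deriv H w) :=
    ((hdiff w hw).hasDerivAt.hasFDerivAt).fderiv
  rw [h1, hd w hw]
  ext1; simp

private lemma const_on_preconnected {U : Set ℂ} (hU : IsOpen U) (hconn : IsPreconnected U)
    {H : ℂ → ℂ} (hH : AnalyticOnNhd ℂ H U) (hd : ∀ z ∈ U, deriv H z = 0)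
    {z₁ : ℂ} (hz₁ : z₁ ∈ U) : ∀ z ∈ U, H z = H z₁ := by
  have hev : H =ᶠ[𝓝 z₁] fun _ => H z₁ := by
    obtain ⟨r, hr, hball⟩ := Metric.isOpen_iff.1 hU z₁ hz₁
    filter_upwards [Metric.ball_mem_nhds z₁ hr] with z hz
    exact const_on_convex (convex_ball z₁ r) isOpen_ball
      (fun w hw => (hH w (hball hw)).differentiableAt) (fun w hw => hd w (hball hw))
      hz (mem_ball_self hr)
  exact fun z hz => hH.eqOn_of_preconnected_of_eventuallyEq
    (fun w _ => analyticAt_const) hconn hz₁ hev hz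

/-- For a locally injective holomorphic function `f` on a connected open set
with nonvanishing derivative, the Schwarzian derivative vanishes identically if
and only if `f` is the restriction of a Möbius transformation
`z ↦ (az+b)/(cz+d)` with `ad − bc ≠ 0`. -/
theorem schwarzian_eq_zero_iff_moebius
    (U : Set ℂ) (hU : IsOpen U) (hconn : IsPreconnected U)
    (f : ℂ → ℂ) (hf : DifferentiableOn ℂ f U)
    (hf' : ∀ z ∈ U, deriv f z ≠ 0) :
    (∀ z ∈ U, schwarzian f z = 0) ↔
      ∃ a b c d : ℂ, a * d - b * c ≠ 0 ∧ (∀ z ∈ U, c * z + d ≠ 0) ∧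
        ∀ z ∈ U, f z = (a * z + b) / (c * z + d) := by
  constructor
  · -- forward direction
    intro hs
    rcases U.eq_empty_or_nonempty with rfl | ⟨z₁, hz₁⟩
    · exact ⟨1, 0, 0, 1, by norm_num, by simp, by simp⟩
    have hfa : AnalyticOnNhd ℂ f U := hf.analyticOnNhd hU
    set F1 : ℂ → ℂ := deriv f with hF1def
    set F2 : ℂ → ℂ := deriv F1 with hF2def
    set F3 : ℂ → ℂ := deriv F2 with hF3def
    have h1 : AnalyticOnNhd ℂ F1 U := hfa.deriv
    have h2 : AnalyticOnNhd ℂ F2 U := h1.deriv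
    set G : ℂ → ℂ := fun z => F2 z / F1 z with hGdef
    have hG : AnalyticOnNhd ℂ G U := h2.div h1 hf'
    have hGd : ∀ z ∈ U, HasDerivAt G ((G z) ^ 2 / 2) z := by
      intro z hz
      have hd1 : HasDerivAt F1 (F2 z) z := (h1 z hz).differentiableAt.hasDerivAt
      have hd2 : HasDerivAt F2 (F3 z) z := (h2 z hz).differentiableAt.hasDerivAt
      have h : HasDerivAt G _ z := hd2.div hd1 (hf' z hz)
      convert h using 1
      have hsz := hs z hz
      unfold schwarzian at hsz
      have hne := hf' z hz
      rw [← hF1def, ← hF2def, ← hF3def] at hsz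
      have key : F3 z * F1 z = 3 / 2 * (F2 z) ^ 2 := by
        have h' := sub_eq_zero.1 hsz
        field_simp [hne] at h'
        have h'' : F3 z * (2 * F1 z) * F1 z = 3 * F2 z ^ 2 * F1 z := by
          linear_combination (F1 z) * h'
        have h3 := mul_right_cancel₀ hne h''
        linear_combination h3 / 2
      have hne2 : (F1 z) ^ 2 ≠ 0 := pow_ne_zero _ hne
      simp only [hGdef]
      rw [div_pow, div_div,
        div_eq_div_iff (mul_ne_zero hne2 two_ne_zero) hne2]
      linear_combination -2 * F1 z ^ 2 * key
    by_cases hzero : ∃ z₀ ∈ U, G z₀ = 0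
    · obtain ⟨z₀, hz₀U, hGz₀⟩ := hzero
      rcases (hG z₀ hz₀U).eventually_eq_zero_or_eventually_ne_zero with hev | hne
      · -- G vanishes identically : f is affine
        have hG0 : EqOn G 0 U :=
          hG.eqOn_zero_of_preconnected_of_eventuallyEq_zero hconn hz₀U hev
        have hF2z : ∀ z ∈ U, F2 z = 0 := by
          intro z hz
          have h0 : F2 z / F1 z = 0 := hG0 hz
          exact (div_eq_zero_iff.1 h0).resolve_right (hf' z hz)
        have hc : ∀ z ∈ U, F1 z = F1 z₁ :=
          const_on_preconnected hU hconn h1 hF2z hz₁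
        set c0 : ℂ := F1 z₁ with hc0
        have hΨa : AnalyticOnNhd ℂ (fun z => f z - c0 * z) U :=
          hfa.sub (analyticOnNhd_const.mul analyticOnNhd_id)
        have hΨd : ∀ z ∈ U, deriv (fun z => f z - c0 * z) z = 0 := by
          intro z hz
          have hfd : HasDerivAt f (F1 z) z := (hfa z hz).differentiableAt.hasDerivAt
          have hlin : HasDerivAt (fun z : ℂ => c0 * z) c0 z := by
            simpa using (hasDerivAt_id z).const_mul c0
          rw [(hfd.fun_sub hlin).deriv, hc z hz, sub_self]
        have hb : ∀ z ∈ U, f z - c0 * z = f z₁ - c0 * z₁ :=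
          const_on_preconnected hU hconn hΨa hΨd hz₁
        refine ⟨c0, f z₁ - c0 * z₁, 0, 1, by simpa using hf' z₁ hz₁, by simp, ?_⟩
        intro z hz
        have hbz := hb z hz
        simp only [zero_mul, zero_add, div_one]
        linear_combination hbz
      · -- isolated zero of G : impossible
        exfalso
        have hU' : ∀ᶠ z in 𝓝 z₀, z ∈ U := hU.mem_nhds hz₀U
        have hne' : ∀ᶠ z in 𝓝 z₀, z ≠ z₀ → G z ≠ 0 := by
          rwa [eventually_nhdsWithin_iff] at hne
        obtain ⟨r, hr0, hball⟩ := Metric.eventually_nhds_iff_ball.1 (hne'.and hU')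
        set m : ℂ := z₀ + ((r / 4 : ℝ) : ℂ) with hm
        have hdist : dist z₀ m = r / 4 := by
          have hzm : z₀ - m = -((r / 4 : ℝ) : ℂ) := by rw [hm]; ring
          rw [Complex.dist_eq, hzm, norm_neg, Complex.norm_real, Real.norm_eq_abs,
            abs_of_pos (by linarith)]
        set B' : Set ℂ := Metric.ball m (r / 4) with hB'
        have hB'sub : B' ⊆ Metric.ball z₀ r := by
          intro y hy
          have h1' : dist y m < r / 4 := hy
          have htri : dist y z₀ ≤ dist y m + dist m z₀ := dist_triangle y m z₀
          rw [dist_comm m z₀, hdist] at htri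
          have : dist y z₀ < r := by linarith
          exact this
        have hz₀B' : z₀ ∉ B' := by
          simp only [hB', Metric.mem_ball]
          rw [hdist]; exact lt_irrefl _
        have hB'U : ∀ z ∈ B', z ∈ U := fun z hz => (hball z (hB'sub hz)).2
        have hGne : ∀ z ∈ B', G z ≠ 0 := by
          intro z hz
          exact (hball z (hB'sub hz)).1 (fun h => hz₀B' (h ▸ hz))
        set H : ℂ → ℂ := fun z => (G z)⁻¹ + z / 2 with hH
        have hHderiv : ∀ z ∈ B', DifferentiableAt ℂ H z ∧ deriv H z = 0 := by
          intro z hz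
          have hinv : HasDerivAt (fun w => (G w)⁻¹) (-((G z) ^ 2 / 2) / (G z) ^ 2) z :=
            (hGd z (hB'U z hz)).inv (hGne z hz)
          have hsum : HasDerivAt H (-((G z) ^ 2 / 2) / (G z) ^ 2 + 1 / 2) z :=
            hinv.add ((hasDerivAt_id z).div_const 2)
          have hx : (G z) ^ 2 ≠ 0 := pow_ne_zero _ (hGne z hz)
          have hval : -((G z) ^ 2 / 2) / (G z) ^ 2 + 1 / 2 = 0 := by
            field_simp [(pow_ne_zero_iff two_ne_zero).1 hx]
            ring
          rw [hval] at hsum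
          exact ⟨hsum.differentiableAt, hsum.deriv⟩
        have hmB' : m ∈ B' := mem_ball_self (by linarith)
        have hconst : ∀ z ∈ B', H z = H m := fun z hz =>
          const_on_convex (convex_ball _ _) isOpen_ball (fun w hw => (hHderiv w hw).1)
            (fun w hw => (hHderiv w hw).2) hz hmB'
        set k : ℂ := H m with hk
        have hGk : ∀ z ∈ B', G z * (k - z / 2) = 1 := by
          intro z hz
          have h' := hconst z hz
          have hinv : (G z)⁻¹ = k - z / 2 := by
            simp only [hH] at h'
            linear_combination h'
          rw [← hinv, mul_inv_cancel₀ (hGne z hz)]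
        have hz₀cl : z₀ ∈ closure B' := by
          rw [hB', closure_ball m (by positivity : (r / 4 : ℝ) ≠ 0)]
          exact Metric.mem_closedBall.2 (le_of_eq hdist)
        haveI : (𝓝[B'] z₀).NeBot := mem_closure_iff_nhdsWithin_neBot.1 hz₀cl
        have hcont : ContinuousAt (fun z => G z * (k - z / 2)) z₀ := by
          apply ContinuousAt.mul (hG z₀ hz₀U).continuousAt
          fun_prop
        have t1 : Tendsto (fun z => G z * (k - z / 2)) (𝓝[B'] z₀)
            (𝓝 (G z₀ * (k - z₀ / 2))) := hcont.continuousWithinAt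
        have t2 : Tendsto (fun z => G z * (k - z / 2)) (𝓝[B'] z₀) (𝓝 1) := by
          apply Tendsto.congr' _ tendsto_const_nhds
          filter_upwards [self_mem_nhdsWithin] with z hz
          exact (hGk z hz).symm
        have hone : G z₀ * (k - z₀ / 2) = 1 := tendsto_nhds_unique t1 t2
        rw [hGz₀, zero_mul] at hone
        exact zero_ne_one hone
    · -- G never vanishes
      push_neg at hzero
      set H : ℂ → ℂ := fun z => (G z)⁻¹ + z / 2 with hH
      have hHa : AnalyticOnNhd ℂ H U :=
        (hG.inv hzero).add
          (analyticOnNhd_id.div analyticOnNhd_const (fun w _ => two_ne_zero))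
      have hHd : ∀ z ∈ U, deriv H z = 0 := by
        intro z hz
        have hinv : HasDerivAt (fun w => (G w)⁻¹) (-((G z) ^ 2 / 2) / (G z) ^ 2) z :=
          (hGd z hz).inv (hzero z hz)
        have hsum : HasDerivAt H (-((G z) ^ 2 / 2) / (G z) ^ 2 + 1 / 2) z :=
          hinv.add ((hasDerivAt_id z).div_const 2)
        have hx : (G z) ^ 2 ≠ 0 := pow_ne_zero _ (hzero z hz)
        have hval : -((G z) ^ 2 / 2) / (G z) ^ 2 + 1 / 2 = 0 := by
          field_simp [(pow_ne_zero_iff two_ne_zero).1 hx]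
          ring
        rw [hval] at hsum
        exact hsum.deriv
      have hk := const_on_preconnected hU hconn hHa hHd hz₁
      set k : ℂ := H z₁ with hkdef
      have hGk : ∀ z ∈ U, G z * (k - z / 2) = 1 := by
        intro z hz
        have h' := hk z hz
        have hinv : (G z)⁻¹ = k - z / 2 := by
          simp only [hH] at h'
          linear_combination h'
        rw [← hinv, mul_inv_cancel₀ (hzero z hz)]
      have hzp : ∀ z ∈ U, z - 2 * k ≠ 0 := by
        intro z hz hcon
        have h' := hGk z hz
        have hzero' : k - z / 2 = 0 := by linear_combination -hcon / 2
        rw [hzero', mul_zero] at h'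
        exact zero_ne_one h'
      have hrel : ∀ z ∈ U, F2 z * (z - 2 * k) = -2 * F1 z := by
        intro z hz
        have h' := hGk z hz
        simp only [hGdef] at h'
        have hne := hf' z hz
        field_simp [hne] at h'
        linear_combination -h'
      have hΦa : AnalyticOnNhd ℂ (fun z => F1 z * (z - 2 * k) ^ 2) U :=
        h1.mul ((analyticOnNhd_id.sub analyticOnNhd_const).pow 2)
      have hΦd : ∀ z ∈ U, deriv (fun z => F1 z * (z - 2 * k) ^ 2) z = 0 := by
        intro z hz
        have hd1 : HasDerivAt F1 (F2 z) z := (h1 z hz).differentiableAt.hasDerivAt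
        have hsq : HasDerivAt (fun z : ℂ => (z - 2 * k) ^ 2) (2 * (z - 2 * k)) z := by
          simpa using ((hasDerivAt_id z).sub_const (2 * k)).fun_pow 2
        rw [(hd1.fun_mul hsq).deriv]
        linear_combination (z - 2 * k) * hrel z hz
      have hC := const_on_preconnected hU hconn hΦa hΦd hz₁
      set C : ℂ := F1 z₁ * (z₁ - 2 * k) ^ 2 with hCdef
      have hCne : C ≠ 0 := mul_ne_zero (hf' z₁ hz₁) (pow_ne_zero _ (hzp z₁ hz₁))
      have hΨa : AnalyticOnNhd ℂ (fun z => f z + C * (z - 2 * k)⁻¹) U :=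
        hfa.add (analyticOnNhd_const.mul
          ((analyticOnNhd_id.sub analyticOnNhd_const).inv hzp))
      have hΨd : ∀ z ∈ U, deriv (fun z => f z + C * (z - 2 * k)⁻¹) z = 0 := by
        intro z hz
        have hfd : HasDerivAt f (F1 z) z := (hfa z hz).differentiableAt.hasDerivAt
        have hinv : HasDerivAt (fun z : ℂ => (z - 2 * k)⁻¹) (-1 / (z - 2 * k) ^ 2) z := by
          simpa using ((hasDerivAt_id z).sub_const (2 * k)).fun_inv (hzp z hz)
        rw [(hfd.fun_add (hinv.const_mul C)).deriv]
        have hΦz : F1 z * (z - 2 * k) ^ 2 = C := by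
          rw [hCdef]; exact hC z hz
        have hne := hzp z hz
        rw [← hΦz]
        field_simp
        ring
      have hD := const_on_preconnected hU hconn hΨa hΨd hz₁
      set D : ℂ := f z₁ + C * (z₁ - 2 * k)⁻¹ with hDdef
      refine ⟨D, -(D * (2 * k)) - C, 1, -(2 * k), ?_, ?_, ?_⟩
      · intro h
        exact hCne (by linear_combination h)
      · intro z hz
        intro hcon
        exact hzp z hz (by linear_combination hcon)
      · intro z hz
        have h' := hD z hz
        have hne := hzp z hz
        have hden0 : (1 : ℂ) * z + -(2 * k) ≠ 0 := by
          intro hcon; exact hne (by linear_combination hcon)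
        rw [eq_div_iff hden0]
        have h'' : f z = D - C * (z - 2 * k)⁻¹ := by linear_combination h'
        rw [h'']
        field_simp
        ring
  · -- backward direction
    rintro ⟨a, b, c, d, hdet, hden, heq⟩
    intro z hz
    set g : ℂ → ℂ := fun w => (a * w + b) / (c * w + d) with hg
    set V : Set ℂ := {w | c * w + d ≠ 0} with hVdef
    have hV : IsOpen V := by
      have : V = (fun w => c * w + d) ⁻¹' ({0}ᶜ) := rfl
      rw [this]
      exact isOpen_compl_singleton.preimage (by continuity)
    have hnum : ∀ w : ℂ, HasDerivAt (fun w => a * w + b) a w := fun w => by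
      simpa using ((hasDerivAt_id w).const_mul a).add_const b
    have hden' : ∀ w : ℂ, HasDerivAt (fun w => c * w + d) c w := fun w => by
      simpa using ((hasDerivAt_id w).const_mul c).add_const d
    have hg1 : ∀ w ∈ V, HasDerivAt g ((a * d - b * c) / (c * w + d) ^ 2) w := by
      intro w hw
      have h : HasDerivAt (fun y => (a * y + b) / (c * y + d)) _ w := (hnum w).fun_div (hden' w) hw
      convert h using 1
      congr 1
      ring
    have hg2 : ∀ w ∈ V,
        HasDerivAt (fun w => (a * d - b * c) / (c * w + d) ^ 2)
          (-2 * c * (a * d - b * c) / (c * w + d) ^ 3) w := by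
      intro w hw
      have hwne : c * w + d ≠ 0 := hw
      have hpow : HasDerivAt (fun w => (c * w + d) ^ 2) (2 * (c * w + d) * c) w := by
        simpa using (hden' w).fun_pow 2
      have h : HasDerivAt (fun y => (a * d - b * c) / (c * y + d) ^ 2) _ w :=
        (hasDerivAt_const w (a * d - b * c)).fun_div hpow (pow_ne_zero 2 hwne)
      convert h using 1
      field_simp [hwne]
      ring
    have hg3 : ∀ w ∈ V,
        HasDerivAt (fun w => -2 * c * (a * d - b * c) / (c * w + d) ^ 3)
          (6 * c ^ 2 * (a * d - b * c) / (c * w + d) ^ 4) w := by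
      intro w hw
      have hwne : c * w + d ≠ 0 := hw
      have hpow : HasDerivAt (fun w => (c * w + d) ^ 3) (3 * (c * w + d) ^ 2 * c) w := by
        simpa using (hden' w).fun_pow 3
      have h : HasDerivAt (fun y => -2 * c * (a * d - b * c) / (c * y + d) ^ 3) _ w :=
        (hasDerivAt_const w (-2 * c * (a * d - b * c))).fun_div hpow (pow_ne_zero 3 hwne)
      convert h using 1
      field_simp [hwne]
      ring
    have hzV : z ∈ V := hden z hz
    have hVnh : V ∈ 𝓝 z := hV.mem_nhds hzV
    have hfg : f =ᶠ[𝓝 z] g := by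
      filter_upwards [hU.mem_nhds hz] with w hw
      exact heq w hw
    have E1 : deriv f =ᶠ[𝓝 z] fun w => (a * d - b * c) / (c * w + d) ^ 2 := by
      refine hfg.deriv.trans ?_
      filter_upwards [hVnh] with w hw
      exact (hg1 w hw).deriv
    have E2 : deriv (deriv f) =ᶠ[𝓝 z]
        fun w => -2 * c * (a * d - b * c) / (c * w + d) ^ 3 := by
      refine E1.deriv.trans ?_
      filter_upwards [hVnh] with w hw
      exact (hg2 w hw).deriv
    have E3 : deriv (deriv (deriv f)) =ᶠ[𝓝 z]
        fun w => 6 * c ^ 2 * (a * d - b * c) / (c * w + d) ^ 4 := by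
      refine E2.deriv.trans ?_
      filter_upwards [hVnh] with w hw
      exact (hg3 w hw).deriv
    unfold schwarzian
    rw [E1.eq_of_nhds, E2.eq_of_nhds, E3.eq_of_nhds]
    have he : c * z + d ≠ 0 := hzV
    field_simp [he, hdet]
    ring
end

section
/- Let z₀ ∈ ℂ and consider the ODE w''(t) − 2 z₀ w'(t)² / (1 + z₀ w(t)) = 0 with initial conditions w(0) = w₀ (with 1 + z₀w₀ ≠ 0) and w'(0) = a. Then the unique solution is w(t) = (a t + w₀(1 + z₀ w₀)) / (−z₀ a t + 1 + z₀ w₀), on the interval where the denominator is nonzero. -/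
open Set Filter

private lemma hasDerivAt_coe (t : ℝ) : HasDerivAt (fun s : ℝ => (s : ℂ)) 1 t := by
  have h := Complex.ofRealCLM.hasDerivAt (x := t)
  simp only [Complex.ofRealCLM_apply] at h
  exact h

private lemma const_on_of_deriv_zero {s : Set ℝ} (hso : IsOpen s) (hsc : IsPreconnected s)
    {g : ℝ → ℂ} (hg : ∀ u ∈ s, DifferentiableAt ℝ g u)
    (hg0 : ∀ u ∈ s, deriv g u = 0) {x y : ℝ} (hx : x ∈ s) (hy : y ∈ s) : g x = g y := by
  have hconv : Convex ℝ s := hsc.ordConnected.convex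
  refine hconv.is_const_of_fderivWithin_eq_zero
    (fun u hu => (hg u hu).differentiableWithinAt) (fun u hu => ?_) hx hy
  rw [fderivWithin_of_isOpen hso hu]
  have h1 : HasDerivAt g 0 u := by rw [← hg0 u hu]; exact (hg u hu).hasDerivAt
  have h2 := h1.hasFDerivAt.fderiv
  rw [h2]; ext; simp

private lemma affine_of_deriv2_zero {s : Set ℝ} (hso : IsOpen s) (hsc : IsPreconnected s)
    (h0 : (0 : ℝ) ∈ s) {g : ℝ → ℂ} (hg : ∀ u ∈ s, DifferentiableAt ℝ g u)
    (hg' : ∀ u ∈ s, DifferentiableAt ℝ (deriv g) u)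
    (h2 : ∀ u ∈ s, deriv (deriv g) u = 0) :
    ∀ t ∈ s, g t = g 0 + (t : ℂ) * deriv g 0 := by
  have hderiv_const : ∀ u ∈ s, deriv g u = deriv g 0 :=
    fun u hu => const_on_of_deriv_zero hso hsc hg' h2 hu h0
  intro t ht
  set ψ : ℝ → ℂ := fun x => g x - (x : ℂ) * deriv g 0 with hψ
  have hψd : ∀ u ∈ s, HasDerivAt ψ (deriv g u - deriv g 0) u := by
    intro u hu
    exact ((hg u hu).hasDerivAt).sub (by simpa using (hasDerivAt_coe u).mul_const (deriv g 0))
  have hc : ψ t = ψ 0 := by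
    refine const_on_of_deriv_zero hso hsc (fun u hu => (hψd u hu).differentiableAt)
      (fun u hu => ?_) ht h0
    rw [(hψd u hu).deriv, hderiv_const u hu, sub_self]
  simp only [hψ, Complex.ofReal_zero, zero_mul, sub_zero] at hc
  linear_combination hc

/-- The geodesic equation `w'' − 2 z₀ (w')² / (1 + z₀ w) = 0` with
`w(0) = w₀`, `w'(0) = a` has the unique solution
`w(t) = (a t + w₀(1 + z₀ w₀)) / (−z₀ a t + 1 + z₀ w₀)` on any interval
(containing 0) where the denominator is nonzero. -/
theorem geodesic_ODE_solution (z₀ w₀ a : ℂ) (h₀ : 1 + z₀ * w₀ ≠ 0) :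
    let wsol : ℝ → ℂ := fun t =>
      (a * (t : ℂ) + w₀ * (1 + z₀ * w₀)) / (-(z₀ * a) * (t : ℂ) + 1 + z₀ * w₀)
    (wsol 0 = w₀) ∧ (deriv wsol 0 = a) ∧
    (∀ t : ℝ, -(z₀ * a) * (t : ℂ) + 1 + z₀ * w₀ ≠ 0 →
      deriv (deriv wsol) t - 2 * z₀ * (deriv wsol t) ^ 2 / (1 + z₀ * wsol t) = 0) ∧
    (∀ (s : Set ℝ) (w : ℝ → ℂ), IsOpen s → IsPreconnected s → (0 : ℝ) ∈ s →
      (∀ t ∈ s, 1 + z₀ * w t ≠ 0) →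
      (∀ t ∈ s, DifferentiableAt ℝ w t ∧ DifferentiableAt ℝ (deriv w) t) →
      (∀ t ∈ s, deriv (deriv w) t - 2 * z₀ * (deriv w t) ^ 2 / (1 + z₀ * w t) = 0) →
      w 0 = w₀ → deriv w 0 = a →
      ∀ t ∈ s, w t = wsol t) := by
  intro wsol
  set N : ℝ → ℂ := fun t => a * (t : ℂ) + w₀ * (1 + z₀ * w₀) with hNdef
  set D : ℝ → ℂ := fun t => -(z₀ * a) * (t : ℂ) + 1 + z₀ * w₀ with hDdef
  have hN : ∀ t : ℝ, HasDerivAt N a t := by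
    intro t
    simpa [hNdef] using ((hasDerivAt_coe t).const_mul a).add_const (w₀ * (1 + z₀ * w₀))
  have hD : ∀ t : ℝ, HasDerivAt D (-(z₀ * a)) t := by
    intro t
    have := (((hasDerivAt_coe t).const_mul (-(z₀ * a))).add_const 1).add_const (z₀ * w₀)
    simpa [hDdef, add_assoc] using this
  have hD0 : D 0 = 1 + z₀ * w₀ := by simp [hDdef]
  have hD0ne : D 0 ≠ 0 := by rw [hD0]; exact h₀
  -- derivative of wsol where D ≠ 0
  have hws : ∀ t : ℝ, D t ≠ 0 →
      HasDerivAt wsol (a * (1 + z₀ * w₀) ^ 2 / (D t) ^ 2) t := by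
    intro t hDt
    have h := (hN t).div (hD t) hDt
    refine h.congr_deriv (Eq.symm ?_)
    have : D t + z₀ * N t = (1 + z₀ * w₀) ^ 2 := by simp only [hNdef, hDdef]; ring
    rw [div_left_inj' (pow_ne_zero 2 hDt)]
    linear_combination a * this
  constructor
  · show N 0 / D 0 = w₀
    rw [hD0]; simp [hNdef]; exact mul_div_cancel_right₀ w₀ h₀
  constructor
  · have := (hws 0 hD0ne).deriv
    rw [this, hD0]
    field_simp
  constructor
  · -- the solution satisfies the ODE
    intro t hDt
    have hDt' : D t ≠ 0 := hDt
    have hU : IsOpen {u : ℝ | D u ≠ 0} := by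
      have hc : Continuous D := by
        simp only [hDdef]; fun_prop
      exact isOpen_ne_fun hc continuous_const
    have heq : deriv wsol =ᶠ[nhds t] fun u => a * (1 + z₀ * w₀) ^ 2 / (D u) ^ 2 := by
      filter_upwards [hU.mem_nhds hDt'] with u hu
      exact (hws u hu).deriv
    have hD2 : HasDerivAt (fun u => (D u) ^ 2) (2 * D t * -(z₀ * a)) t := by
      have h := (hD t).mul (hD t)
      have e : (D * D) = fun u => (D u) ^ 2 := by funext u; simp only [Pi.mul_apply]; ring
      rw [e] at h
      refine h.congr_deriv (Eq.symm ?_)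
      ring
    have hg : HasDerivAt (fun u => a * (1 + z₀ * w₀) ^ 2 / (D u) ^ 2)
        ((0 * (D t) ^ 2 - (a * (1 + z₀ * w₀) ^ 2) * (2 * D t * -(z₀ * a))) / ((D t) ^ 2) ^ 2) t :=
      (hasDerivAt_const t _).div hD2 (pow_ne_zero 2 hDt')
    have key : D t + z₀ * N t = (1 + z₀ * w₀) ^ 2 := by simp only [hNdef, hDdef]; ring
    have h1z : 1 + z₀ * wsol t = (1 + z₀ * w₀) ^ 2 / D t := by
      show 1 + z₀ * (N t / D t) = _
      field_simp
      linear_combination key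
    rw [heq.deriv_eq, hg.deriv, (hws t hDt').deriv, h1z]
    field_simp
    ring
  · -- uniqueness
    intro s w hso hsc h0 hne hdiff hode hw0 hw'0 t ht
    have hode' : ∀ u ∈ s, deriv (deriv w) u = 2 * z₀ * (deriv w u) ^ 2 / (1 + z₀ * w u) :=
      fun u hu => sub_eq_zero.mp (hode u hu)
    set f : ℝ → ℂ := fun x => (1 + z₀ * w x)⁻¹ with hfdef
    set φ : ℝ → ℂ := fun x => w x * (1 + z₀ * w x)⁻¹ with hφdef
    have h1d : ∀ u ∈ s, HasDerivAt (fun x => 1 + z₀ * w x) (z₀ * deriv w u) u := by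
      intro u hu
      simpa using (((hdiff u hu).1.hasDerivAt).const_mul z₀).const_add 1
    have hfd : ∀ u ∈ s, HasDerivAt f (-(z₀ * deriv w u) / (1 + z₀ * w u) ^ 2) u := by
      intro u hu
      have h := (hasDerivAt_const u (1 : ℂ)).div (h1d u hu) (hne u hu)
      have e : ((fun _ => (1 : ℂ)) / fun y => (1 + z₀ * w y)) = f := by
        funext y; simp [hfdef, one_div]
      rw [e] at h
      exact h.congr_deriv (by ring)
    have hφd : ∀ u ∈ s, HasDerivAt φ (deriv w u / (1 + z₀ * w u) ^ 2) u := by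
      intro u hu
      have h := ((hdiff u hu).1.hasDerivAt).mul (hfd u hu)
      refine h.congr_deriv (Eq.symm ?_)
      simp only [hfdef]
      field_simp [hne u hu]
      ring
    -- second derivatives of f and φ vanish on s
    have hpow : ∀ u ∈ s, HasDerivAt (fun x => (1 + z₀ * w x) ^ 2)
        (2 * (1 + z₀ * w u) * (z₀ * deriv w u)) u := by
      intro u hu
      have h := (h1d u hu).mul (h1d u hu)
      have e : ((fun x => 1 + z₀ * w x) * fun x => 1 + z₀ * w x) = fun x => (1 + z₀ * w x) ^ 2 := by
        funext x; simp only [Pi.mul_apply]; ring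
      rw [e] at h
      refine h.congr_deriv (Eq.symm ?_)
      ring
    have hF0 : ∀ u ∈ s, HasDerivAt (fun x => -(z₀ * deriv w x) / (1 + z₀ * w x) ^ 2) 0 u := by
      intro u hu
      have hnum : HasDerivAt (fun x => -(z₀ * deriv w x)) (-(z₀ * deriv (deriv w) u)) u :=
        (((hdiff u hu).2.hasDerivAt).const_mul z₀).neg
      have h := hnum.div (hpow u hu) (pow_ne_zero 2 (hne u hu))
      refine h.congr_deriv (Eq.symm ?_)
      rw [hode' u hu]
      field_simp [hne u hu]
      ring
    have hΦ0 : ∀ u ∈ s, HasDerivAt (fun x => deriv w x / (1 + z₀ * w x) ^ 2) 0 u := by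
      intro u hu
      have h := ((hdiff u hu).2.hasDerivAt).div (hpow u hu) (pow_ne_zero 2 (hne u hu))
      refine h.congr_deriv (Eq.symm ?_)
      rw [hode' u hu]
      field_simp [hne u hu]
      ring
    have hfev : ∀ u ∈ s, deriv f =ᶠ[nhds u] fun x => -(z₀ * deriv w x) / (1 + z₀ * w x) ^ 2 := by
      intro u hu
      filter_upwards [hso.mem_nhds hu] with v hv
      exact (hfd v hv).deriv
    have hφev : ∀ u ∈ s, deriv φ =ᶠ[nhds u] fun x => deriv w x / (1 + z₀ * w x) ^ 2 := by
      intro u hu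
      filter_upwards [hso.mem_nhds hu] with v hv
      exact (hφd v hv).deriv
    have hfaff : f t = f 0 + (t : ℂ) * deriv f 0 := by
      refine affine_of_deriv2_zero hso hsc h0 (fun u hu => (hfd u hu).differentiableAt)
        (fun u hu => ?_) (fun u hu => ?_) t ht
      · exact ((hfev u hu).differentiableAt_iff).mpr (hF0 u hu).differentiableAt
      · rw [(hfev u hu).deriv_eq, (hF0 u hu).deriv]
    have hφaff : φ t = φ 0 + (t : ℂ) * deriv φ 0 := by
      refine affine_of_deriv2_zero hso hsc h0 (fun u hu => (hφd u hu).differentiableAt)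
        (fun u hu => ?_) (fun u hu => ?_) t ht
      · exact ((hφev u hu).differentiableAt_iff).mpr (hΦ0 u hu).differentiableAt
      · rw [(hφev u hu).deriv_eq, (hΦ0 u hu).deriv]
    -- evaluate initial data
    have hf0 : f 0 = (1 + z₀ * w₀)⁻¹ := by simp only [hfdef, hw0]
    have hdf0 : deriv f 0 = -(z₀ * a) / (1 + z₀ * w₀) ^ 2 := by
      rw [(hfd 0 h0).deriv, hw0, hw'0]
    have hφ0 : φ 0 = w₀ * (1 + z₀ * w₀)⁻¹ := by simp only [hφdef, hw0]
    have hdφ0 : deriv φ 0 = a / (1 + z₀ * w₀) ^ 2 := by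
      rw [(hφd 0 h0).deriv, hw0, hw'0]
    rw [hf0, hdf0] at hfaff
    rw [hφ0, hdφ0] at hφaff
    have hX : 1 + z₀ * w t ≠ 0 := hne t ht
    have hRB : (1 + z₀ * w t)⁻¹ = D t / (1 + z₀ * w₀) ^ 2 := by
      have : f t = (1 + z₀ * w t)⁻¹ := rfl
      rw [← this, hfaff]
      simp only [hDdef]
      field_simp
      ring
    have hDt : D t ≠ 0 := by
      intro h
      exact inv_ne_zero hX (by rw [hRB, h, zero_div])
    have hX2 : 1 + z₀ * w t = (1 + z₀ * w₀) ^ 2 / D t := by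
      rw [← inv_inv (1 + z₀ * w t), hRB, inv_div, eq_div_iff hDt]
      field_simp
    show w t = N t / D t
    have hEA : w t * (1 + z₀ * w t)⁻¹
        = w₀ * (1 + z₀ * w₀)⁻¹ + (t : ℂ) * (a / (1 + z₀ * w₀) ^ 2) := hφaff
    calc w t = (w t * (1 + z₀ * w t)⁻¹) * (1 + z₀ * w t) := by rw [inv_mul_cancel_right₀ hX]
      _ = (w₀ * (1 + z₀ * w₀)⁻¹ + (t : ℂ) * (a / (1 + z₀ * w₀) ^ 2))
            * ((1 + z₀ * w₀) ^ 2 / D t) := by rw [hEA, hX2]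
      _ = N t / D t := by
          simp only [hNdef]
          rw [← mul_div_assoc]
          congr 1
          have hX0 : (1 + z₀ * w₀)⁻¹ * (1 + z₀ * w₀) = 1 := inv_mul_cancel₀ h₀
          rw [div_eq_mul_inv, ← inv_pow]
          linear_combination (w₀ * (1 + z₀ * w₀) + (t : ℂ) * a * ((1 + z₀ * w₀)⁻¹ * (1 + z₀ * w₀) + 1)) * hX0
end

section
/- Let (V, g, I, J, K) be a linear hyper-Hermitian structure on a real vector space of dimension 4 (g a positive definite inner product, I, J, K orthogonal complex structures satisfying the quaternionic relations). Then the 2-forms ω_I, ω_J, ω_K (with ω_A(u,v) = g(Au,v)) satisfy ω_I ∧ ω_I = ω_J ∧ ω_J = ω_K ∧ ω_K, and (ω_J + iω_K) ∧ (ω_J − iω_K) = 2 ω_I ∧ ω_I. -/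
/-- The wedge product of two real-valued 2-forms, as a 4-linear expression. -/
def wedge2 {V : Type*} (α β : V → V → ℝ) (v0 v1 v2 v3 : V) : ℝ :=
  α v0 v1 * β v2 v3 - α v0 v2 * β v1 v3 + α v0 v3 * β v1 v2
    + α v1 v2 * β v0 v3 - α v1 v3 * β v0 v2 + α v2 v3 * β v0 v1

/-- The wedge product of two complex-valued 2-forms. -/
def wedge2C {V : Type*} (α β : V → V → ℂ) (v0 v1 v2 v3 : V) : ℂ :=
  α v0 v1 * β v2 v3 - α v0 v2 * β v1 v3 + α v0 v3 * β v1 v2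
    + α v1 v2 * β v0 v3 - α v1 v3 * β v0 v2 + α v2 v3 * β v0 v1

set_option maxRecDepth 8000 in
set_option maxHeartbeats 1600000 in
/-- For a linear hyper-Hermitian structure on a 4-dimensional real inner
product space, the Kähler forms satisfy
`ω_I ∧ ω_I = ω_J ∧ ω_J = ω_K ∧ ω_K` and
`(ω_J + iω_K) ∧ (ω_J − iω_K) = 2 ω_I ∧ ω_I`. -/
theorem hyperHermitian_wedge_identities
    (V : Type*) [AddCommGroup V] [Module ℝ V] [FiniteDimensional ℝ V]
    (hdim : Module.finrank ℝ V = 4)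
    (g : V →ₗ[ℝ] V →ₗ[ℝ] ℝ)
    (hsymm : ∀ u v, g u v = g v u) (hpos : ∀ u, u ≠ 0 → 0 < g u u)
    (I J K : V →ₗ[ℝ] V)
    (hI2 : I ∘ₗ I = -LinearMap.id) (hJ2 : J ∘ₗ J = -LinearMap.id)
    (hK2 : K ∘ₗ K = -LinearMap.id)
    (hIJ : I ∘ₗ J = K) (hJI : J ∘ₗ I = -K)
    (hIo : ∀ u v, g (I u) (I v) = g u v)
    (hJo : ∀ u v, g (J u) (J v) = g u v)
    (hKo : ∀ u v, g (K u) (K v) = g u v) :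
    ∀ v0 v1 v2 v3 : V,
      wedge2 (fun u v => g (I u) v) (fun u v => g (I u) v) v0 v1 v2 v3
        = wedge2 (fun u v => g (J u) v) (fun u v => g (J u) v) v0 v1 v2 v3 ∧
      wedge2 (fun u v => g (J u) v) (fun u v => g (J u) v) v0 v1 v2 v3
        = wedge2 (fun u v => g (K u) v) (fun u v => g (K u) v) v0 v1 v2 v3 ∧
      wedge2C (fun u v => (g (J u) v : ℂ) + Complex.I * (g (K u) v : ℂ))
              (fun u v => (g (J u) v : ℂ) - Complex.I * (g (K u) v : ℂ))
              v0 v1 v2 v3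
        = 2 * (wedge2 (fun u v => g (I u) v) (fun u v => g (I u) v) v0 v1 v2 v3 : ℂ) := by
  -- pointwise versions of the quaternionic relations
  have hI2' : ∀ u, I (I u) = -u := fun u => congrFun (congrArg DFunLike.coe hI2) u
  have hJ2' : ∀ u, J (J u) = -u := fun u => congrFun (congrArg DFunLike.coe hJ2) u
  have hK2' : ∀ u, K (K u) = -u := fun u => congrFun (congrArg DFunLike.coe hK2) u
  have hIJ' : ∀ u, I (J u) = K u := fun u => congrFun (congrArg DFunLike.coe hIJ) u
  have hJI' : ∀ u, J (I u) = -K u := fun u => congrFun (congrArg DFunLike.coe hJI) u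
  have hKJ' : ∀ u, K (J u) = -I u := by
    intro u
    have : K (J u) = I (J (J u)) := (hIJ' (J u)).symm
    rw [this, hJ2', map_neg]
  have hJK' : ∀ u, J (K u) = I u := by
    intro u
    have : J (K u) = J (I (J u)) := by rw [hIJ']
    rw [this, hJI', hKJ', neg_neg]
  have hIK' : ∀ u, I (K u) = -J u := by
    intro u
    have : I (K u) = I (I (J u)) := by rw [hIJ']
    rw [this, hI2']
  have hKI' : ∀ u, K (I u) = J u := by
    intro u
    have : K (I u) = I (J (I u)) := (hIJ' (I u)).symm
    rw [this, hJI', map_neg, hIK', neg_neg]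
  -- a unit vector
  have : Nontrivial V := Module.nontrivial_of_finrank_pos (R := ℝ) (by omega)
  obtain ⟨w, hw⟩ := exists_ne (0 : V)
  set r : ℝ := g w w with hr
  have hrpos : 0 < r := hpos w hw
  set e0 : V := (Real.sqrt r)⁻¹ • w with he0def
  have hsq : Real.sqrt r * Real.sqrt r = r := Real.mul_self_sqrt hrpos.le
  have hsne : Real.sqrt r ≠ 0 := ne_of_gt (Real.sqrt_pos.mpr hrpos)
  have h00 : g e0 e0 = 1 := by
    simp only [he0def, map_smul, LinearMap.smul_apply, smul_eq_mul]
    field_simp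
    linarith [hsq, hr]
  set e1 : V := I e0 with he1def
  set e2 : V := J e0 with he2def
  set e3 : V := K e0 with he3def
  -- actions of I, J, K on the basis
  have hIe0 : I e0 = e1 := rfl
  have hIe1 : I e1 = -e0 := by rw [he1def, hI2']
  have hIe2 : I e2 = e3 := by rw [he2def, hIJ', ← he3def]
  have hIe3 : I e3 = -e2 := by rw [he3def, hIK', ← he2def]
  have hJe0 : J e0 = e2 := rfl
  have hJe1 : J e1 = -e3 := by rw [he1def, hJI', ← he3def]
  have hJe2 : J e2 = -e0 := by rw [he2def, hJ2']
  have hJe3 : J e3 = e1 := by rw [he3def, hJK', ← he1def]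
  have hKe0 : K e0 = e3 := rfl
  have hKe1 : K e1 = e2 := by rw [he1def, hKI', ← he2def]
  have hKe2 : K e2 = -e1 := by rw [he2def, hKJ', ← he1def]
  have hKe3 : K e3 = -e0 := by rw [he3def, hK2']
  have h11 : g e1 e1 = 1 := by
    have h := hIo e0 e0; rw [hIe0] at h; rw [h, h00]
  have h22 : g e2 e2 = 1 := by
    have h := hJo e0 e0; rw [hJe0] at h; rw [h, h00]
  have h33 : g e3 e3 = 1 := by
    have h := hKo e0 e0; rw [hKe0] at h; rw [h, h00]
  have h01 : g e0 e1 = 0 := by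
    have h := hIo e1 e0
    rw [hIe1, hIe0, map_neg, LinearMap.neg_apply] at h
    linarith [hsymm e0 e1, h]
  have h02 : g e0 e2 = 0 := by
    have h := hJo e2 e0
    rw [hJe2, hJe0, map_neg, LinearMap.neg_apply] at h
    linarith [hsymm e0 e2, h]
  have h03 : g e0 e3 = 0 := by
    have h := hKo e3 e0
    rw [hKe3, hKe0, map_neg, LinearMap.neg_apply] at h
    linarith [hsymm e0 e3, h]
  have h12 : g e1 e2 = 0 := by
    have h := hIo e1 e2
    rw [hIe1, hIe2, map_neg, LinearMap.neg_apply] at h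
    linarith [h, h03]
  have h13 : g e1 e3 = 0 := by
    have h := hIo e1 e3
    rw [hIe1, hIe3] at h
    simp only [map_neg, LinearMap.neg_apply, neg_neg] at h
    linarith [h, h02]
  have h23 : g e2 e3 = 0 := by
    have h := hJo e2 e3
    rw [hJe2, hJe3, map_neg, LinearMap.neg_apply] at h
    linarith [h, h01]
  have h10 : g e1 e0 = 0 := by rw [hsymm]; exact h01
  have h20 : g e2 e0 = 0 := by rw [hsymm]; exact h02
  have h30 : g e3 e0 = 0 := by rw [hsymm]; exact h03
  have h21 : g e2 e1 = 0 := by rw [hsymm]; exact h12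
  have h31 : g e3 e1 = 0 := by rw [hsymm]; exact h13
  have h32 : g e3 e2 = 0 := by rw [hsymm]; exact h23
  -- the basis spans
  set b : Fin 4 → V := ![e0, e1, e2, e3] with hb
  have hgb : ∀ i j : Fin 4, g (b i) (b j) = if i = j then 1 else 0 := by
    intro i j
    fin_cases i <;> fin_cases j <;>
      simp [hb, h00, h01, h02, h03, h10, h11, h12, h13, h20, h21, h22, h23,
        h30, h31, h32, h33]
  have hli : LinearIndependent ℝ b := by
    rw [Fintype.linearIndependent_iff]
    intro c hc i
    have h := congrArg (fun x => g (b i) x) hc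
    simp only [map_sum, map_smul, smul_eq_mul, map_zero] at h
    rw [Fin.sum_univ_four] at h
    fin_cases i <;>
      simpa [hb, h00, h01, h02, h03, h10, h11, h12, h13, h20, h21, h22, h23,
        h30, h31, h32, h33] using h
  have hspan : Submodule.span ℝ (Set.range b) = ⊤ := by
    apply Submodule.eq_top_of_finrank_eq
    rw [finrank_span_eq_card hli, hdim]
    simp
  have hdecomp : ∀ v : V,
      v = g e0 v • e0 + g e1 v • e1 + g e2 v • e2 + g e3 v • e3 := by
    intro v
    have hv : v ∈ Submodule.span ℝ (Set.range b) := hspan ▸ Submodule.mem_top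
    obtain ⟨c, hc⟩ := Submodule.mem_span_range_iff_exists_fun ℝ |>.mp hv
    rw [Fin.sum_univ_four] at hc
    have hcoef : ∀ i : Fin 4, g (b i) v = c i := by
      intro i
      rw [← hc]
      simp only [map_add, map_smul, smul_eq_mul]
      fin_cases i <;>
        simp [hb, h00, h01, h02, h03, h10, h11, h12, h13, h20, h21, h22, h23,
          h30, h31, h32, h33]
    have c0 := hcoef 0; have c1 := hcoef 1; have c2 := hcoef 2; have c3 := hcoef 3
    simp only [hb, Matrix.cons_val_zero, Matrix.cons_val_one, Matrix.head_cons,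
      Matrix.cons_val_two, Matrix.tail_cons, Matrix.cons_val_three] at c0 c1 c2 c3 hc
    rw [c0, c1, c2, c3]
    exact hc.symm
  -- coordinate formulas for the Kähler forms
  have homI : ∀ u v : V, g (I u) v
      = g e0 u * g e1 v - g e1 u * g e0 v + g e2 u * g e3 v - g e3 u * g e2 v := by
    intro u v
    conv_lhs => rw [hdecomp u, hdecomp v]
    conv_rhs =>
      rw [show g e0 u = g u e0 from hsymm _ _, show g e1 u = g u e1 from hsymm _ _,
        show g e2 u = g u e2 from hsymm _ _, show g e3 u = g u e3 from hsymm _ _]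
    simp only [map_add, map_smul, map_neg, LinearMap.add_apply, LinearMap.smul_apply,
      LinearMap.neg_apply, smul_eq_mul, hIe0, hIe1, hIe2, hIe3,
      h00, h01, h02, h03, h10, h11, h12, h13, h20, h21, h22, h23, h30, h31, h32, h33]
    rw [hdecomp u, hdecomp v]
    simp only [map_add, map_smul, LinearMap.add_apply, LinearMap.smul_apply, smul_eq_mul,
      h00, h01, h02, h03, h10, h11, h12, h13, h20, h21, h22, h23, h30, h31, h32, h33]
    ring
  have homJ : ∀ u v : V, g (J u) v
      = g e0 u * g e2 v - g e1 u * g e3 v - g e2 u * g e0 v + g e3 u * g e1 v := by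
    intro u v
    conv_lhs => rw [hdecomp u, hdecomp v]
    conv_rhs =>
      rw [show g e0 u = g u e0 from hsymm _ _, show g e1 u = g u e1 from hsymm _ _,
        show g e2 u = g u e2 from hsymm _ _, show g e3 u = g u e3 from hsymm _ _]
    simp only [map_add, map_smul, map_neg, LinearMap.add_apply, LinearMap.smul_apply,
      LinearMap.neg_apply, smul_eq_mul, hJe0, hJe1, hJe2, hJe3,
      h00, h01, h02, h03, h10, h11, h12, h13, h20, h21, h22, h23, h30, h31, h32, h33]
    rw [hdecomp u, hdecomp v]
    simp only [map_add, map_smul, LinearMap.add_apply, LinearMap.smul_apply, smul_eq_mul,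
      h00, h01, h02, h03, h10, h11, h12, h13, h20, h21, h22, h23, h30, h31, h32, h33]
    ring
  have homK : ∀ u v : V, g (K u) v
      = g e0 u * g e3 v + g e1 u * g e2 v - g e2 u * g e1 v - g e3 u * g e0 v := by
    intro u v
    conv_lhs => rw [hdecomp u, hdecomp v]
    conv_rhs =>
      rw [show g e0 u = g u e0 from hsymm _ _, show g e1 u = g u e1 from hsymm _ _,
        show g e2 u = g u e2 from hsymm _ _, show g e3 u = g u e3 from hsymm _ _]
    simp only [map_add, map_smul, map_neg, LinearMap.add_apply, LinearMap.smul_apply,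
      LinearMap.neg_apply, smul_eq_mul, hKe0, hKe1, hKe2, hKe3,
      h00, h01, h02, h03, h10, h11, h12, h13, h20, h21, h22, h23, h30, h31, h32, h33]
    rw [hdecomp u, hdecomp v]
    simp only [map_add, map_smul, LinearMap.add_apply, LinearMap.smul_apply, smul_eq_mul,
      h00, h01, h02, h03, h10, h11, h12, h13, h20, h21, h22, h23, h30, h31, h32, h33]
    ring
  intro v0 v1 v2 v3
  refine ⟨?_, ?_, ?_⟩
  · simp only [wedge2]
    rw [homI v0 v1, homI v2 v3, homI v0 v2, homI v1 v3, homI v0 v3, homI v1 v2, homJ v0 v1, homJ v2 v3, homJ v0 v2, homJ v1 v3, homJ v0 v3, homJ v1 v2]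
    ring
  · simp only [wedge2]
    rw [homJ v0 v1, homJ v2 v3, homJ v0 v2, homJ v1 v3, homJ v0 v3, homJ v1 v2, homK v0 v1, homK v2 v3, homK v0 v2, homK v1 v3, homK v0 v3, homK v1 v2]
    ring
  · simp only [wedge2, wedge2C]
    rw [homI v0 v1, homI v2 v3, homI v0 v2, homI v1 v3, homI v0 v3, homI v1 v2, homJ v0 v1, homJ v2 v3, homJ v0 v2, homJ v1 v3, homJ v0 v3, homJ v1 v2, homK v0 v1, homK v2 v3, homK v0 v2, homK v1 v3, homK v0 v3, homK v1 v2]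
    push_cast
    ring_nf
    simp only [Complex.I_sq]
    ring
end
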